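/- arXiv:2101.04999 — 10 statements merged into one kernel-verified Lean document; each statement's English description precedes it below -/
import Mathlib

section
/- Let m, N be natural numbers with N ≥ 2 and gcd(m, N) = 1. Write β = ord_m(N) for the multiplicative order of m modulo N and m^β = μN + 1. Then the multiplicative order of m modulo N² equals β · N / gcd(μ, N). -/
/-!
Reduction modulo `N` shows that `β` divides the order of `m` modulo `N²`, so that order is `β`
times the order of `m ^ β = 1 + μN`. As `(μN)² = 0` in `ZMod (N²)`, the binomial expansion
collapses to `(1 + μN) ^ s = 1 + sμN`, hence the multiplicative order of `1 + μN` is the additive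
order of `μN`, which is `N / gcd(μ, N)`.
-/

theorem one_add_pow_of_mul_self_eq_zero {R : Type*} [Semiring R] {x : R} (hx : x * x = 0)
    (k : ℕ) : (1 + x) ^ k = 1 + k * x := by
  induction k with
  | zero => simp
  | succ k ih =>
    rw [pow_succ, ih]
    push_cast
    calc (1 + k * x) * (1 + x) = 1 + (k + 1) * x + k * (x * x) := by noncomm_ring
      _ = 1 + (k + 1) * x := by rw [hx, mul_zero, add_zero]

theorem orderOf_one_add_of_mul_self_eq_zero {R : Type*} [Ring R] {x : R} (hx : x * x = 0) :
    orderOf (1 + x) = addOrderOf x := by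
  rw [← orderOf_ofAdd_eq_addOrderOf, orderOf_eq_orderOf_iff]
  intro k
  rw [one_add_pow_of_mul_self_eq_zero hx, add_eq_left, ← ofAdd_nsmul, ofAdd_eq_one, nsmul_eq_mul]

theorem orderOf_eq_mul_orderOf_pow_of_dvd {G : Type*} [Monoid G] {x : G} {n : ℕ}
    (h : n ∣ orderOf x) : orderOf x = n * orderOf (x ^ n) := by
  rcases eq_or_ne n 0 with rfl | hn
  · simpa using h
  · rw [orderOf_pow_of_dvd hn h, Nat.mul_div_cancel' h]

namespace ZMod

theorem orderOf_natCast_dvd_of_dvd {m n : ℕ} (h : m ∣ n) (a : ℕ) :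
    orderOf (a : ZMod m) ∣ orderOf (a : ZMod n) := by
  simpa using orderOf_map_dvd (castHom h (ZMod m)).toMonoidHom (a : ZMod n)

theorem natCast_mul_mul_self_eq_zero (a n : ℕ) :
    ((a * n : ℕ) : ZMod (n ^ 2)) * ((a * n : ℕ) : ZMod (n ^ 2)) = 0 := by
  rw [← Nat.cast_mul, natCast_eq_zero_iff]
  exact ⟨a * a, by ring⟩

theorem addOrderOf_natCast_mul_eq_div_gcd {n : ℕ} (hn : n ≠ 0) (a : ℕ) :
    addOrderOf ((a * n : ℕ) : ZMod (n ^ 2)) = n / n.gcd a := by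
  rw [addOrderOf_coe _ (pow_ne_zero 2 hn), sq, mul_comm a, Nat.gcd_mul_left,
    Nat.mul_div_mul_left _ _ (Nat.pos_of_ne_zero hn)]

end ZMod

theorem stmt_1_general (m N μ : ℕ) (hN : 2 ≤ N)
    (hμ : m ^ orderOf (m : ZMod N) = μ * N + 1) :
    orderOf (m : ZMod (N ^ 2)) = orderOf (m : ZMod N) * N / Nat.gcd μ N := by
  have hβ : orderOf (m : ZMod N) ∣ orderOf (m : ZMod (N ^ 2)) :=
    ZMod.orderOf_natCast_dvd_of_dvd (dvd_pow_self N two_ne_zero) m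
  have hpow : (m : ZMod (N ^ 2)) ^ orderOf (m : ZMod N) = 1 + ((μ * N : ℕ) : ZMod (N ^ 2)) := by
    rw [← Nat.cast_pow, hμ, add_comm, Nat.cast_add, Nat.cast_one]
  rw [orderOf_eq_mul_orderOf_pow_of_dvd hβ, hpow,
    orderOf_one_add_of_mul_self_eq_zero (ZMod.natCast_mul_mul_self_eq_zero μ N),
    ZMod.addOrderOf_natCast_mul_eq_div_gcd (by omega), Nat.gcd_comm,
    Nat.mul_div_assoc _ (Nat.gcd_dvd_right μ N)]

theorem stmt_1 (m N μ : ℕ) (hN : 2 ≤ N) (hcop : Nat.Coprime m N)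
    (hμ : m ^ orderOf (m : ZMod N) = μ * N + 1) :
    orderOf (m : ZMod (N ^ 2)) = orderOf (m : ZMod N) * N / Nat.gcd μ N :=
  stmt_1_general m N μ hN hμ
end

section
/- Let m ≥ 2 and let P be a finite set of primes none of which divides m. Then there exists a constant C > 0 such that for every positive integer N all of whose prime factors lie in P (with gcd(N, m) = 1), one has ord_m(N) / N ≥ C. -/
/-!
By the lifting-the-exponent lemma, for each prime `p ∤ m` there is a constant `c p` (`lteConst m p`) with
`v_p(m ^ k - 1) ≤ c p + v_p(k)` for all `k ≥ 1`. If `r = ord_m(N)` then `N ∣ m ^ r - 1`, so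
`v_p(N) ≤ c p + v_p(r)` for every `p ∣ N`, i.e. `N ∣ r * ∏_{p ∈ P} p ^ c p`. Hence
`ord_m(N) / N ≥ 1 / ∏_{p ∈ P} p ^ c p`.
-/

open Finset

namespace Nat

lemma padicValNat_le_of_dvd {p a b : ℕ} [Fact p.Prime] (hb : b ≠ 0) (h : a ∣ b) :
    padicValNat p a ≤ padicValNat p b :=
  (padicValNat_dvd_iff_le hb).mp (pow_padicValNat_dvd.trans h)

/-- A uniform form of the lifting-the-exponent lemma, valid also for `p = 2`. -/
lemma padicValNat_pow_sub_one_le {p x : ℕ} [hp : Fact p.Prime] (hx : 1 < x)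
    (hpx : p ∣ x - 1) {n : ℕ} (hn : n ≠ 0) :
    padicValNat p (x ^ n - 1) ≤
      padicValNat p (x + 1) + padicValNat p (x - 1) + padicValNat p n := by
  have hpx' : ¬p ∣ x := fun h ↦ by
    have := (dvd_sub_iff_right (by omega) h).mpr hpx
    rw [Nat.sub_sub_self hx.le, dvd_one] at this
    exact hp.out.ne_one this
  rcases hp.out.eq_two_or_odd' with rfl | hodd
  · -- `x ^ n - 1` divides `x ^ (2 * n) - 1`, to which the even-exponent case applies
    have hdvd : x ^ n - 1 ∣ x ^ (2 * n) - 1 := by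
      simpa [pow_mul'] using sub_one_dvd_pow_sub_one (x := x ^ n) (n := 2)
    have hpos : x ^ (2 * n) - 1 ≠ 0 := by
      have := Nat.one_lt_pow (by omega : 2 * n ≠ 0) hx; omega
    have hlte := padicValNat.pow_two_sub_one hx hpx' (by omega) (even_two_mul n)
    rw [padicValNat.mul two_ne_zero hn, padicValNat_self] at hlte
    have := padicValNat_le_of_dvd (p := 2) hpos hdvd
    omega
  · have hlte := padicValNat.pow_sub_pow hodd hx hpx hpx' hn
    rw [one_pow] at hlte
    omega

def lteConst (m p : ℕ) : ℕ := padicValNat p (m ^ φ p + 1) + padicValNat p (m ^ φ p - 1)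

lemma padicValNat_pow_sub_one_le_lteConst {m p : ℕ} [hp : Fact p.Prime] (hm : 1 < m)
    (hmp : m.Coprime p) {k : ℕ} (hk : k ≠ 0) :
    padicValNat p (m ^ k - 1) ≤ lteConst m p + padicValNat p k := by
  have hx : 1 < m ^ φ p := one_lt_pow (totient_pos.mpr hp.out.pos).ne' hm
  have hpx : p ∣ m ^ φ p - 1 := (modEq_iff_dvd' hx.le).mp (ModEq.pow_totient hmp).symm
  have hdvd : m ^ k - 1 ∣ (m ^ φ p) ^ k - 1 := by
    simpa [← pow_mul, mul_comm] using sub_one_dvd_pow_sub_one (x := m ^ k) (n := φ p)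
  have hpos : (m ^ φ p) ^ k - 1 ≠ 0 := by
    have := Nat.one_lt_pow hk hx; omega
  exact (padicValNat_le_of_dvd hpos hdvd).trans (padicValNat_pow_sub_one_le hx hpx hk)

lemma dvd_mul_prod_of_dvd_pow_sub_one {m N r : ℕ} (hm : 1 < m) (hNm : N.Coprime m) (hr : r ≠ 0)
    (hN : N ∣ m ^ r - 1) : N ∣ r * ∏ p ∈ N.primeFactors, p ^ lteConst m p := by
  have hmr : m ^ r - 1 ≠ 0 := by
    have := Nat.one_lt_pow hr hm; omega
  have hN0 : N ≠ 0 := by rintro rfl; exact hmr (zero_dvd_iff.mp hN)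
  set D := ∏ p ∈ N.primeFactors, p ^ lteConst m p
  have hD0 : D ≠ 0 :=
    prod_ne_zero_iff.mpr fun p hp ↦ pow_ne_zero _ (prime_of_mem_primeFactors hp).ne_zero
  refine (factorization_prime_le_iff_dvd hN0 (mul_ne_zero hr hD0)).mp fun p hp ↦ ?_
  have : Fact p.Prime := ⟨hp⟩
  by_cases hpN : p ∣ N
  · have hmem : p ∈ N.primeFactors := mem_primeFactors.mpr ⟨hp, hpN, hN0⟩
    have hval : padicValNat p N ≤ lteConst m p + padicValNat p r :=
      (padicValNat_le_of_dvd hmr hN).trans <| padicValNat_pow_sub_one_le_lteConst hm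
        (hNm.coprime_dvd_left hpN).symm hr
    have hpow : p ^ (lteConst m p + padicValNat p r) ∣ r * D := by
      rw [pow_add, mul_comm r]
      exact mul_dvd_mul (dvd_prod_of_mem _ hmem) pow_padicValNat_dvd
    rw [factorization_def N hp]
    exact hval.trans ((hp.pow_dvd_iff_le_factorization (mul_ne_zero hr hD0)).mp hpow)
  · simp [factorization_eq_zero_of_not_dvd hpN]

end Nat

namespace ZMod

lemma orderOf_natCast_pos {m N : ℕ} [NeZero N] (h : m.Coprime N) : 0 < orderOf (m : ZMod N) :=
  orderOf_pos_iff.mpr ((isUnit_iff_coprime m N).mpr h).isOfFinOrder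

lemma dvd_pow_sub_one_of_natCast_pow_eq_one {m N k : ℕ} (hm : m ≠ 0) (h : (m : ZMod N) ^ k = 1) :
    N ∣ m ^ k - 1 := by
  have : ((m ^ k : ℕ) : ZMod N) = ((1 : ℕ) : ZMod N) := by push_cast; exact h
  exact (Nat.modEq_iff_dvd' (Nat.one_le_pow _ _ (Nat.pos_of_ne_zero hm))).mp
    ((natCast_eq_natCast_iff _ _ _).mp this).symm

end ZMod

theorem stmt_5 (m : ℕ) (hm : 2 ≤ m) (P : Finset ℕ)
    (hP : ∀ p ∈ P, Nat.Prime p ∧ ¬ p ∣ m) :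
    ∃ C : ℝ, 0 < C ∧ ∀ N : ℕ, 0 < N → Nat.Coprime N m →
      (∀ p : ℕ, p.Prime → p ∣ N → p ∈ P) →
      C ≤ (orderOf (m : ZMod N) : ℝ) / (N : ℝ) := by
  set D := ∏ p ∈ P, p ^ Nat.lteConst m p
  have hD : 0 < D := prod_pos fun p hp ↦ pow_pos (hP p hp).1.pos _
  refine ⟨1 / D, by positivity, fun N hN hNm hNP ↦ ?_⟩
  have : NeZero N := ⟨hN.ne'⟩
  set r := orderOf (m : ZMod N)
  have hr : 0 < r := ZMod.orderOf_natCast_pos hNm.symm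
  have hsub : N.primeFactors ⊆ P := fun p hp ↦
    hNP p (Nat.prime_of_mem_primeFactors hp) (Nat.dvd_of_mem_primeFactors hp)
  have hNr : N ∣ r * D :=
    (Nat.dvd_mul_prod_of_dvd_pow_sub_one (by omega) hNm hr.ne'
      (ZMod.dvd_pow_sub_one_of_natCast_pow_eq_one (by omega) (pow_orderOf_eq_one _))).trans
      (mul_dvd_mul_left r (prod_dvd_prod_of_subset _ _ _ hsub))
  have hle : (N : ℝ) ≤ r * D := by exact_mod_cast Nat.le_of_dvd (by positivity) hNr
  rw [div_le_div_iff₀ (by positivity) (by positivity)]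
  linarith
end

section
/- Let m ≥ 2 and let s be a positive unit of the ring ℤ[1/m]. Then there exist infinitely many integers N > 0 coprime to m such that the image of s in the unit group (ℤ/Nℤ)× has odd multiplicative order. -/
/-- `ℤ[1/m]` as a subring of `ℚ`. -/
def Zinv (m : ℕ) : Subring ℚ := Subring.closure {((m : ℚ))⁻¹}

/-!
Write `s = a / b` in lowest terms, with `a > 0` and `b ∣ mᵏ`. For a prime `q > m` let
`N = (a^q - b^q) / (a - b) = ∑_{i<q} aⁱ b^(q-1-i) ≥ q`. A prime `p ∣ N` not dividing `b` sees
`(a/b)^q = 1` in `𝔽_p`: either `a ≡ b` and then `N ≡ q a^(q-1)` forces `p = q`, or `a/b` has order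
`q` and `q ∣ p - 1`. So every prime factor of `N` is at least `q > m`, whence `N` is coprime to `m`,
`ℤ[1/m] → ℤ/N` exists, and there `s^q = 1`, so the order of `s` divides the odd prime `q`.
-/

open Finset

theorem pow_eq_pow_of_geom_sum₂_eq_zero {R : Type*} [CommRing R] {x y : R} {n : ℕ}
    (h : ∑ i ∈ range n, x ^ i * y ^ (n - 1 - i) = 0) : x ^ n = y ^ n := by
  rw [← sub_eq_zero, ← geom_sum₂_mul, h, zero_mul]

theorem pow_eq_one_of_mul_eq_of_pow_eq_pow {M : Type*} [CommMonoid M] {x a b : M} {n : ℕ}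
    (hb : IsUnit b) (hx : x * b = a) (hab : a ^ n = b ^ n) : x ^ n = 1 :=
  (hb.pow n).mul_right_cancel (by rw [← mul_pow, hx, hab, one_mul])

theorem le_geom_sum₂ {a b : ℕ} (ha : 0 < a) (hb : 0 < b) (n : ℕ) :
    n ≤ ∑ i ∈ range n, a ^ i * b ^ (n - 1 - i) := by
  simpa using card_nsmul_le_sum (range n) (fun i => a ^ i * b ^ (n - 1 - i)) 1
    fun i _ => Nat.one_le_iff_ne_zero.mpr (by positivity)

theorem natCast_eq_zero_or_orderOf_div_eq_of_geom_sum₂_eq_zero {F : Type*} [Field F]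
    {x y : F} {q : ℕ} (hq : q.Prime) (hy : y ≠ 0)
    (h : ∑ i ∈ range q, x ^ i * y ^ (q - 1 - i) = 0) :
    (q : F) = 0 ∨ orderOf (x / y) = q := by
  by_cases hxy : x = y
  · subst hxy
    rw [geom_sum₂_self, mul_eq_zero] at h
    exact .inl (h.resolve_right (pow_ne_zero _ hy))
  · have := Fact.mk hq
    refine .inr (orderOf_eq_prime ?_ ?_)
    · rw [div_pow, pow_eq_pow_of_geom_sum₂_eq_zero h, div_self (pow_ne_zero _ hy)]
    · rwa [Ne, div_eq_one_iff_eq hy]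

theorem Nat.Prime.le_of_dvd_geom_sum₂ {a b p q : ℕ} (hq : q.Prime) (hp : p.Prime)
    (hab : a.Coprime b) (hdvd : p ∣ ∑ i ∈ range q, a ^ i * b ^ (q - 1 - i)) : q ≤ p := by
  have := Fact.mk hp
  have hsum : ∑ i ∈ range q, (a : ZMod p) ^ i * (b : ZMod p) ^ (q - 1 - i) = 0 := by
    simpa using (ZMod.natCast_eq_zero_iff _ p).mpr hdvd
  have hb : (b : ZMod p) ≠ 0 := by
    intro hb
    have ha : (a : ZMod p) ^ q = 0 := by
      rw [pow_eq_pow_of_geom_sum₂_eq_zero hsum, hb, zero_pow hq.ne_zero]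
    refine Nat.not_coprime_of_dvd_of_dvd hp.one_lt ?_ ?_ hab <;>
      rw [← ZMod.natCast_eq_zero_iff]
    exacts [pow_eq_zero_iff hq.ne_zero |>.mp ha, hb]
  rcases natCast_eq_zero_or_orderOf_div_eq_of_geom_sum₂_eq_zero hq hb hsum with hpq | hord
  · rw [ZMod.natCast_eq_zero_iff] at hpq
    exact ((hq.eq_one_or_self_of_dvd p hpq).resolve_left hp.one_lt.ne').ge
  · have hne : (a : ZMod p) / b ≠ 0 := by
      intro h0
      have := pow_orderOf_eq_one ((a : ZMod p) / b)
      rw [hord, h0, zero_pow hq.ne_zero] at this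
      exact zero_ne_one this
    have := Nat.le_of_dvd (Nat.sub_pos_of_lt hp.one_lt) (hord ▸ ZMod.orderOf_dvd_card_sub_one hne)
    omega

theorem coprime_geom_sum₂_of_lt {a b m q : ℕ} (hq : q.Prime) (hab : a.Coprime b)
    (hm : 0 < m) (hmq : m < q) : (∑ i ∈ range q, a ^ i * b ^ (q - 1 - i)).Coprime m :=
  Nat.coprime_of_dvd fun _ hp hpN hpm =>
    (hmq.trans_le (hq.le_of_dvd_geom_sum₂ hp hab hpN)).not_ge (Nat.le_of_dvd hm hpm)

theorem Subring.map_mul_den {S : Subring ℚ} {R : Type*} [Ring R] (f : S →+* R) (x : S) :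
    f x * ((x : ℚ).den : R) = ((x : ℚ).num : R) := by
  have : x * ((x : ℚ).den : S) = ((x : ℚ).num : S) :=
    Subtype.ext (by push_cast; exact Rat.mul_den_eq_num _)
  simpa using congrArg f this

namespace Zinv

theorem den_dvd_pow {m : ℕ} (hm : 0 < m) {x : ℚ} (hx : x ∈ Zinv m) : ∃ j : ℕ, x.den ∣ m ^ j := by
  induction hx using Subring.closure_induction with
  | mem x hx =>
      rcases hx with rfl
      exact ⟨1, by rw [Rat.inv_natCast_den_of_pos hm, pow_one]⟩
  | zero => exact ⟨0, by simp⟩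
  | one => exact ⟨0, by simp⟩
  | add x y _ _ ihx ihy =>
      obtain ⟨j, hj⟩ := ihx
      obtain ⟨k, hk⟩ := ihy
      exact ⟨j + k, (Rat.add_den_dvd x y).trans (pow_add m j k ▸ mul_dvd_mul hj hk)⟩
  | neg x _ ih => simpa using ih
  | mul x y _ _ ihx ihy =>
      obtain ⟨j, hj⟩ := ihx
      obtain ⟨k, hk⟩ := ihy
      exact ⟨j + k, (Rat.mul_den_dvd x y).trans (pow_add m j k ▸ mul_dvd_mul hj hk)⟩

theorem coe_algebraMap (m : ℕ) (n : ℤ) : ((algebraMap ℤ (Zinv m) n : Zinv m) : ℚ) = n := by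
  rw [algebraMap_int_eq, eq_intCast]
  norm_cast

theorem isLocalization_away {m : ℕ} (hm : 0 < m) : IsLocalization.Away (m : ℤ) (Zinv m) := by
  apply IsLocalization.Away.mk
  · refine IsUnit.of_mul_eq_one ⟨(m : ℚ)⁻¹, Subring.subset_closure rfl⟩ ?_
    ext
    push_cast [coe_algebraMap]
    exact mul_inv_cancel₀ (by positivity)
  · intro z
    obtain ⟨j, k, hk⟩ := den_dvd_pow hm z.2
    refine ⟨j, (z : ℚ).num * k, ?_⟩
    ext
    push_cast [coe_algebraMap]
    rw [← Nat.cast_pow, hk, Nat.cast_mul, ← mul_assoc, Rat.mul_den_eq_num]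
  · intro x y h
    have : (x : ℚ) = y := by simpa [coe_algebraMap] using congrArg Subtype.val h
    exact ⟨0, by rw [Int.cast_inj.mp this]⟩

theorem nonempty_ringHom_zmod {m N : ℕ} (hm : 0 < m) (hN : N.Coprime m) :
    Nonempty (Zinv m →+* ZMod N) :=
  haveI := isLocalization_away hm
  ⟨IsLocalization.Away.lift (m : ℤ) (g := Int.castRingHom (ZMod N))
    (by simpa using (ZMod.isUnit_iff_coprime m N).mpr hN.symm)⟩

end Zinv

theorem stmt_10 (m : ℕ) (hm : 2 ≤ m) (s : (Zinv m)ˣ) (hs : (0 : ℚ) < ((s : Zinv m) : ℚ)) :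
    {N : ℕ | 0 < N ∧ Nat.Coprime N m ∧
      ∃ f : Zinv m →+* ZMod N, Odd (orderOf (f (s : Zinv m)))}.Infinite := by
  have hm0 : 0 < m := by omega
  obtain ⟨x, hx⟩ : ∃ x : ℚ, ((s : Zinv m) : ℚ) = x := ⟨_, rfl⟩
  have hnum : 0 < x.num := Rat.num_pos.mpr (hx ▸ hs)
  obtain ⟨a, ha⟩ : ∃ a : ℕ, (a : ℤ) = x.num := ⟨_, Int.toNat_of_nonneg hnum.le⟩
  have hab : a.Coprime x.den := by
    rw [show a = x.num.natAbs by omega]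
    exact x.reduced
  obtain ⟨j, hj⟩ := Zinv.den_dvd_pow hm0 (hx ▸ (s : Zinv m).2)
  refine Set.infinite_of_forall_exists_gt fun B => ?_
  obtain ⟨q, hqge, hq⟩ := Nat.exists_infinite_primes (max m B + 3)
  have hmq : m < q := by omega
  obtain ⟨N, hN⟩ : ∃ N, N = ∑ i ∈ range q, a ^ i * x.den ^ (q - 1 - i) := ⟨_, rfl⟩
  have hqN : q ≤ N := hN ▸ le_geom_sum₂ (by omega) x.pos q
  have hNm : N.Coprime m := hN ▸ coprime_geom_sum₂_of_lt hq hab hm0 hmq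
  obtain ⟨f⟩ := Zinv.nonempty_ringHom_zmod hm0 hNm
  refine ⟨N, ⟨by omega, hNm, f, ?_⟩, by omega⟩
  have hden : IsUnit (x.den : ZMod N) :=
    (ZMod.isUnit_iff_coprime _ _).mpr ((hNm.pow_right j).coprime_dvd_right hj).symm
  have hfs : f (s : Zinv m) * x.den = a := by
    simpa [hx, ← ha] using Subring.map_mul_den f s
  have hsum : ∑ i ∈ range q, (a : ZMod N) ^ i * (x.den : ZMod N) ^ (q - 1 - i) = 0 := by
    simpa [hN] using ZMod.natCast_self N
  exact (hq.odd_of_ne_two (by omega)).of_dvd_nat <| orderOf_dvd_of_pow_eq_one <|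
    pow_eq_one_of_mul_eq_of_pow_eq_pow hden hfs (pow_eq_pow_of_geom_sum₂_eq_zero hsum)
end

section
/- Let m ≥ 2 and let G_m be the subgroup of GL_2(ℤ[1/m]) consisting of matrices of the form [[m^k, r],[0,1]] with k ∈ ℤ, r ∈ ℤ[1/m]. For N coprime to m, let G_m(N) be the kernel of reduction modulo N on G_m. Then G_m/G_m(N) is isomorphic to the semidirect product (ℤ/Nℤ) ⋊ (ℤ/ord_m(N)ℤ), where the generator of ℤ/ord_m(N)ℤ acts on ℤ/Nℤ by multiplication by m; in particular |G_m/G_m(N)| = N · ord_m(N). -/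
open Multiplicative

namespace Zinv

variable {m : ℕ}

def mUnit (hm : m ≠ 0) : (Zinv m)ˣ where
  val := m
  inv := ⟨(m : ℚ)⁻¹, Subring.subset_closure rfl⟩
  val_inv := Subtype.ext (by simp [hm])
  inv_val := Subtype.ext (by simp [hm])

lemma coe_mUnit_zpow (hm : m ≠ 0) (k : ℤ) :
    (((mUnit hm ^ k : (Zinv m)ˣ) : Zinv m) : ℚ) = (m : ℚ) ^ k := by
  change ((Units.map (Zinv m).subtype.toMonoidHom (mUnit hm ^ k) : ℚˣ) : ℚ) = _
  rw [map_zpow, Units.val_zpow_eq_zpow_val]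
  rfl

lemma eq_mUnit_zpow (hm : m ≠ 0) {x : Zinv m} {k : ℤ} (hx : (x : ℚ) = (m : ℚ) ^ k) :
    x = ((mUnit hm ^ k : (Zinv m)ˣ) : Zinv m) :=
  Subtype.ext (hx.trans (coe_mUnit_zpow hm k).symm)

lemma map_of_coe_eq_zpow {R : Type*} [Semiring R] (f : Zinv m →+* R) (hm : m ≠ 0)
    {x : Zinv m} {k : ℤ} (hx : (x : ℚ) = (m : ℚ) ^ k) :
    f x = ((Units.map f.toMonoidHom (mUnit hm) ^ k : Rˣ) : R) := by
  rw [eq_mUnit_zpow hm hx, ← map_zpow]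
  rfl

lemma coe_map_mUnit {R : Type*} [Semiring R] (f : Zinv m →+* R) (hm : m ≠ 0) :
    ((Units.map f.toMonoidHom (mUnit hm) : Rˣ) : R) = m :=
  map_natCast f m

end Zinv

lemma act_ofAdd_intCast {R : Type*} [Ring R] {d : ℕ} (u : Rˣ)
    (act : Multiplicative (ZMod d) →* MulAut (Multiplicative R))
    (hact : ∀ x : R, act (ofAdd 1) (ofAdd x) = ofAdd (u * x)) (k : ℤ) (x : R) :
    act (ofAdd (k : ZMod d)) (ofAdd x) = ofAdd (((u ^ k : Rˣ) : R) * x) := by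
  induction k using Int.induction_on generalizing x with
  | zero => simp
  | succ k ih =>
    rw [Int.cast_add, Int.cast_one, ofAdd_add, map_mul, MulAut.mul_apply, hact, ih,
      zpow_add_one, Units.val_mul, mul_assoc]
  | pred k ih =>
    have hx : ofAdd x = act (ofAdd 1) (ofAdd (((u⁻¹ : Rˣ) : R) * x)) := by
      rw [hact, Units.mul_inv_cancel_left]
    rw [hx, ← MulAut.mul_apply, ← map_mul, ← ofAdd_add, Int.cast_sub, Int.cast_one,
      sub_add_cancel, ih, zpow_sub_one, Units.val_mul, mul_assoc]

def affineMatrices (m : ℕ) : Set (GL (Fin 2) (Zinv m)) :=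
  {A | (∃ k : ℤ, ((A.val 0 0 : Zinv m) : ℚ) = (m : ℚ) ^ k) ∧
    A.val 1 0 = 0 ∧ A.val 1 1 = 1}

namespace affineMatrices

variable {m : ℕ} {A B : GL (Fin 2) (Zinv m)}

noncomputable def exponent (hA : A ∈ affineMatrices m) : ℤ := hA.1.choose

lemma coe_val_zero_zero (hA : A ∈ affineMatrices m) :
    ((A.val 0 0 : Zinv m) : ℚ) = (m : ℚ) ^ exponent hA :=
  hA.1.choose_spec

lemma exponent_eq (hm : 2 ≤ m) (hA : A ∈ affineMatrices m) {k : ℤ}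
    (h : ((A.val 0 0 : Zinv m) : ℚ) = (m : ℚ) ^ k) : exponent hA = k :=
  zpow_right_injective₀ (by positivity) (by norm_cast; omega)
    ((coe_val_zero_zero hA).symm.trans h)

lemma mul_val_zero_zero (hB : B ∈ affineMatrices m) :
    (A * B).val 0 0 = A.val 0 0 * B.val 0 0 := by
  simp [Matrix.mul_apply, hB.2.1]

lemma mul_val_zero_one (hB : B ∈ affineMatrices m) :
    (A * B).val 0 1 = A.val 0 0 * B.val 0 1 + A.val 0 1 := by
  simp [Matrix.mul_apply, hB.2.2, add_comm]

lemma exponent_mul (hm : 2 ≤ m) (hA : A ∈ affineMatrices m) (hB : B ∈ affineMatrices m)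
    (hAB : A * B ∈ affineMatrices m) : exponent hAB = exponent hA + exponent hB := by
  apply exponent_eq hm
  rw [mul_val_zero_zero hB, Subring.coe_mul, coe_val_zero_zero hA, coe_val_zero_zero hB,
    zpow_add₀ (by positivity)]

end affineMatrices

lemma Subgroup.val_mem_affineMatrices {m : ℕ} {G : Subgroup (GL (Fin 2) (Zinv m))}
    (hG : (G : Set (GL (Fin 2) (Zinv m))) = affineMatrices m) (A : G) :
    (A : GL (Fin 2) (Zinv m)) ∈ affineMatrices m := by
  rw [← hG]; exact A.2

section Reduction

open affineMatrices

variable {m : ℕ} {R : Type*} [CommRing R] (hm : 2 ≤ m) {G : Subgroup (GL (Fin 2) (Zinv m))}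
  (hG : (G : Set (GL (Fin 2) (Zinv m))) = affineMatrices m) (f : Zinv m →+* R)
  (act : Multiplicative (ZMod (orderOf (m : R))) →* MulAut (Multiplicative R))
  (hact : ∀ x : R, act (ofAdd 1) (ofAdd x) = ofAdd ((m : R) * x))

noncomputable def reductionHom :
    G →* Multiplicative R ⋊[act] Multiplicative (ZMod (orderOf (m : R))) :=
  MonoidHom.mk'
    (fun A => ⟨ofAdd (f ((A : GL (Fin 2) (Zinv m)).val 0 1)),
      ofAdd (exponent (G.val_mem_affineMatrices hG A) : ZMod (orderOf (m : R)))⟩)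
    (fun A B => by
      have hm0 : m ≠ 0 := by omega
      have hA := G.val_mem_affineMatrices hG A
      have hB := G.val_mem_affineMatrices hG B
      have hu := act_ofAdd_intCast (Units.map f.toMonoidHom (Zinv.mUnit hm0)) act
        (by simpa only [Zinv.coe_map_mUnit] using hact)
      ext
      · simp only [SemidirectProduct.mul_left, Subgroup.coe_mul, mul_val_zero_one hB, hu,
          map_add, map_mul, Zinv.map_of_coe_eq_zpow f hm0 (coe_val_zero_zero hA), toAdd_mul,
          toAdd_ofAdd, add_comm]
      · simp only [SemidirectProduct.mul_right, Subgroup.coe_mul,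
          exponent_mul hm hA hB, Int.cast_add, ofAdd_add])

lemma ker_map_comp_subtype_eq_ker_reductionHom :
    ((Matrix.GeneralLinearGroup.map f).comp G.subtype).ker =
      (reductionHom hm hG f act hact).ker := by
  have hm0 : m ≠ 0 := by omega
  ext A
  have hA := G.val_mem_affineMatrices hG A
  have h00 : f ((A : GL (Fin 2) (Zinv m)).val 0 0) = 1 ↔
      (exponent hA : ZMod (orderOf (m : R))) = 0 := by
    rw [Zinv.map_of_coe_eq_zpow f hm0 (coe_val_zero_zero hA), Units.val_eq_one,
      ← orderOf_dvd_iff_zpow_eq_one, ← orderOf_units, Zinv.coe_map_mUnit,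
      ZMod.intCast_zmod_eq_zero_iff_dvd]
  simp only [MonoidHom.mem_ker, MonoidHom.comp_apply, Subgroup.coe_subtype, Units.ext_iff,
    ← Matrix.ext_iff, Fin.forall_fin_two, Matrix.GeneralLinearGroup.map_apply, hA.2.1, hA.2.2,
    Units.val_one, SemidirectProduct.ext_iff, SemidirectProduct.one_left,
    SemidirectProduct.one_right, Matrix.one_apply_eq, Matrix.one_apply_ne zero_ne_one,
    Matrix.one_apply_ne one_ne_zero, map_zero, map_one, and_true]
  exact and_comm.trans (and_congr ofAdd_eq_one.symm (h00.trans ofAdd_eq_one.symm))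

lemma reductionHom_surjective (hf : Function.Surjective f) :
    Function.Surjective (reductionHom hm hG f act hact) := by
  have hm0 : m ≠ 0 := by omega
  rintro ⟨a, c⟩
  obtain ⟨r, hr⟩ := hf (toAdd a)
  obtain ⟨k, hk⟩ := ZMod.intCast_surjective (toAdd c)
  let A : GL (Fin 2) (Zinv m) :=
    Matrix.nonsingInvUnit !![((Zinv.mUnit hm0 ^ k : (Zinv m)ˣ) : Zinv m), r; 0, 1]
      (by simp [Matrix.det_fin_two_of])
  have hA00 : ((A.val 0 0 : Zinv m) : ℚ) = (m : ℚ) ^ k := Zinv.coe_mUnit_zpow hm0 k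
  have hA : A ∈ affineMatrices m := ⟨⟨k, hA00⟩, rfl, rfl⟩
  refine ⟨⟨A, SetLike.mem_coe.1 (hG ▸ hA)⟩, SemidirectProduct.ext hr ?_⟩
  change ofAdd (exponent _ : ZMod (orderOf (m : R))) = c
  rw [exponent_eq hm _ hA00, hk]
  rfl

end Reduction

theorem stmt_11_general (m N : ℕ) (hm : 2 ≤ m)
    -- `G` is the subgroup of matrices `[[m^k, r], [0, 1]]`, `k ∈ ℤ`, `r ∈ ℤ[1/m]`
    (G : Subgroup (GL (Fin 2) (Zinv m)))
    (hG : (G : Set (GL (Fin 2) (Zinv m))) =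
      {A : GL (Fin 2) (Zinv m) |
        (∃ k : ℤ, ((A.val 0 0 : Zinv m) : ℚ) = (m : ℚ) ^ k) ∧
        A.val 1 0 = 0 ∧ A.val 1 1 = 1})
    -- `f` is reduction modulo `N` (the unique ring homomorphism `ℤ[1/m] → ℤ/Nℤ`)
    (f : Zinv m →+* ZMod N)
    -- `act` is the action of `ℤ/ord_m(N)ℤ` on `ℤ/Nℤ` by multiplication by `m`
    (act : Multiplicative (ZMod (orderOf (m : ZMod N))) →*
      MulAut (Multiplicative (ZMod N)))
    (hact : ∀ x : ZMod N,
      act (Multiplicative.ofAdd (1 : ZMod (orderOf (m : ZMod N))))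
          (Multiplicative.ofAdd x) = Multiplicative.ofAdd ((m : ZMod N) * x)) :
    Nonempty ((G ⧸ ((Matrix.GeneralLinearGroup.map f).comp G.subtype).ker) ≃*
      (Multiplicative (ZMod N) ⋊[act] Multiplicative (ZMod (orderOf (m : ZMod N))))) ∧
    Nat.card (G ⧸ ((Matrix.GeneralLinearGroup.map f).comp G.subtype).ker) =
      N * orderOf (m : ZMod N) := by
  let e := (QuotientGroup.quotientMulEquivOfEq
      (ker_map_comp_subtype_eq_ker_reductionHom hm hG f act hact)).trans
    (QuotientGroup.quotientKerEquivOfSurjective _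
      (reductionHom_surjective hm hG f act hact (ZMod.ringHom_surjective f)))
  refine ⟨⟨e⟩, ?_⟩
  rw [Nat.card_congr e.toEquiv, SemidirectProduct.card, Nat.card_congr toAdd,
    Nat.card_congr toAdd, Nat.card_zmod, Nat.card_zmod]

theorem stmt_11 (m N : ℕ) (hm : 2 ≤ m) (hN : 0 < N) (hcop : Nat.Coprime N m)
    -- `G` is the subgroup of matrices `[[m^k, r], [0, 1]]`, `k ∈ ℤ`, `r ∈ ℤ[1/m]`
    (G : Subgroup (GL (Fin 2) (Zinv m)))
    (hG : (G : Set (GL (Fin 2) (Zinv m))) =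
      {A : GL (Fin 2) (Zinv m) |
        (∃ k : ℤ, ((A.val 0 0 : Zinv m) : ℚ) = (m : ℚ) ^ k) ∧
        A.val 1 0 = 0 ∧ A.val 1 1 = 1})
    -- `f` is reduction modulo `N` (the unique ring homomorphism `ℤ[1/m] → ℤ/Nℤ`)
    (f : Zinv m →+* ZMod N)
    -- `act` is the action of `ℤ/ord_m(N)ℤ` on `ℤ/Nℤ` by multiplication by `m`
    (act : Multiplicative (ZMod (orderOf (m : ZMod N))) →*
      MulAut (Multiplicative (ZMod N)))
    (hact : ∀ x : ZMod N,
      act (Multiplicative.ofAdd (1 : ZMod (orderOf (m : ZMod N))))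
          (Multiplicative.ofAdd x) = Multiplicative.ofAdd ((m : ZMod N) * x)) :
    Nonempty ((G ⧸ ((Matrix.GeneralLinearGroup.map f).comp G.subtype).ker) ≃*
      (Multiplicative (ZMod N) ⋊[act] Multiplicative (ZMod (orderOf (m : ZMod N))))) ∧
    Nat.card (G ⧸ ((Matrix.GeneralLinearGroup.map f).comp G.subtype).ker) =
      N * orderOf (m : ZMod N) :=
  stmt_11_general m N hm G hG f act hact
end

section
/- Let m ≥ 2 and set N_k = (m²−1)^k for k ≥ 1. Then the multiplicative order of m modulo N_k equals 2·(m²−1)^{k−1} for every k ≥ 1. -/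
/-!
Write `n = m² - 1`, so `m² = 1 + n`. When `n` is even it is divisible by `8`, so the
lifting-the-exponent lemma applies at every prime `p ∣ n` and gives
`v_p((1 + n)^e - 1) = v_p(n) + v_p(e)`; comparing valuations prime by prime,
`n^(k+1) ∣ (1 + n)^e - 1 ↔ n^k ∣ e`, i.e. `m²` has order `n^k` modulo `n^(k+1)`.
Modulo `n` itself `m` has order `2`, so the order of `m` modulo `n^(k+1)` is even,
hence twice the order of `m²`.
-/

theorem Nat.emultiplicity_add_one_pow_sub_one {p n : ℕ} (hp : p.Prime) (hpn : p ∣ n)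
    (h4 : p = 2 → 4 ∣ n) (e : ℕ) :
    emultiplicity p ((n + 1) ^ e - 1) = emultiplicity p n + emultiplicity p e := by
  have hx : ¬p ∣ n + 1 := fun h => hp.one_lt.ne' (Nat.dvd_one.mp ((Nat.dvd_add_right hpn).mp h))
  rcases hp.eq_two_or_odd' with rfl | hodd
  · have hlte := Int.two_pow_sub_pow' e (x := n + 1) (y := 1)
      (by simpa using Int.natCast_dvd_natCast.mpr (h4 rfl)) (by exact_mod_cast hx)
    rw [← Int.natCast_emultiplicity, ← Int.natCast_emultiplicity, ← Int.natCast_emultiplicity]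
    simpa [Nat.cast_sub (Nat.one_le_pow _ _ n.succ_pos)] using hlte
  · simpa using Nat.emultiplicity_pow_sub_pow hp hodd (x := n + 1) (y := 1) (by simpa) hx e

theorem Nat.pow_succ_dvd_add_one_pow_sub_one_iff {n : ℕ} (hn : n ≠ 0) (h4 : 2 ∣ n → 4 ∣ n)
    (k e : ℕ) : n ^ (k + 1) ∣ (n + 1) ^ e - 1 ↔ n ^ k ∣ e := by
  simp only [UniqueFactorizationMonoid.dvd_iff_emultiplicity_le (pow_ne_zero _ hn)]
  refine forall₂_congr fun p hp => ?_
  rw [emultiplicity_pow hp, emultiplicity_pow hp]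
  by_cases hpn : p ∣ n
  · have hfin : emultiplicity p n ≠ ⊤ := finiteMultiplicity_iff_emultiplicity_ne_top.mp
      (Nat.finiteMultiplicity_iff.mpr ⟨hp.ne_one, Nat.pos_of_ne_zero hn⟩)
    rw [Nat.emultiplicity_add_one_pow_sub_one (Nat.prime_iff.mpr hp) hpn
      (fun h2 => h4 (h2 ▸ hpn)), Nat.cast_succ, add_mul, one_mul, add_comm,
      ENat.add_le_add_iff_left hfin]
  · simp [emultiplicity_eq_zero.mpr hpn]

theorem ZMod.natCast_eq_one_iff_dvd_sub_one {N a : ℕ} (ha : 1 ≤ a) :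
    (a : ZMod N) = 1 ↔ N ∣ a - 1 := by
  rw [← ZMod.natCast_eq_zero_iff, Nat.cast_sub ha, Nat.cast_one, sub_eq_zero]

theorem ZMod.orderOf_natCast_add_one {n : ℕ} (hn : n ≠ 0) (h4 : 2 ∣ n → 4 ∣ n) (k : ℕ) :
    orderOf ((n + 1 : ℕ) : ZMod (n ^ (k + 1))) = n ^ k := by
  refine Nat.dvd_right_iff_eq.mp fun e => ?_
  rw [orderOf_dvd_iff_pow_eq_one, ← Nat.cast_pow,
    natCast_eq_one_iff_dvd_sub_one (Nat.one_le_pow _ _ n.succ_pos),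
    Nat.pow_succ_dvd_add_one_pow_sub_one_iff hn h4]

theorem ZMod.orderOf_natCast_sq_sub_one {m : ℕ} (hm : 2 ≤ m) :
    orderOf (m : ZMod (m ^ 2 - 1)) = 2 := by
  have hsq : 1 ≤ m ^ 2 := Nat.one_le_pow _ _ (by omega)
  refine orderOf_eq_prime ?_ ?_
  · rw [← Nat.cast_pow, natCast_eq_one_iff_dvd_sub_one hsq]
  · rw [Ne, natCast_eq_one_iff_dvd_sub_one (by omega)]
    intro h
    have : 2 * m ≤ m ^ 2 := by nlinarith
    have := Nat.le_of_dvd (by omega) h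
    omega

theorem stmt_12 (m : ℕ) (hm : 2 ≤ m) (k : ℕ) (hk : 1 ≤ k) :
    orderOf (m : ZMod ((m ^ 2 - 1) ^ k)) = 2 * (m ^ 2 - 1) ^ (k - 1) := by
  obtain ⟨k, rfl⟩ := Nat.exists_eq_add_of_le' hk
  set n := m ^ 2 - 1
  have hmn : m ^ 2 = n + 1 := by have : 1 ≤ m ^ 2 := Nat.one_le_pow _ _ (by omega); omega
  have hn : n ≠ 0 := by nlinarith
  have h4 : 2 ∣ n → 4 ∣ n := by
    intro h2
    rcases Nat.even_or_odd m with ⟨a, rfl⟩ | hodd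
    · have : n + 1 = 4 * (a * a) := by rw [← hmn]; ring
      omega
    · exact dvd_trans (by norm_num) (Nat.eight_dvd_sq_sub_one_of_odd hodd)
  have heven : 2 ∣ orderOf (m : ZMod (n ^ (k + 1))) := by
    have := orderOf_map_dvd (ZMod.castHom (dvd_pow_self n k.succ_ne_zero) (ZMod n)).toMonoidHom
      (m : ZMod (n ^ (k + 1)))
    simpa [ZMod.orderOf_natCast_sq_sub_one hm] using this
  rw [Nat.add_sub_cancel, ← Nat.mul_div_cancel' heven, ← orderOf_pow_of_dvd two_ne_zero heven,
    ← Nat.cast_pow, hmn, ZMod.orderOf_natCast_add_one hn h4]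
end

section
/- Let A be a subring of ℚ and let g be an element of the group U_n(A) of upper unitriangular n×n matrices over A. Then there exists a unique group homomorphism α : (A, +) → U_n(A) with α(1) = g, given by α(r) = (1 + X)^r = ∑_{k=0}^{n-1} C(r,k) X^k where g = 1 + X with X strictly upper triangular. -/
/-!
`(1 + X) ^ r` is the truncation at degree `n` of the binomial series `∑ (r choose k) T ^ k`,
evaluated at `X`. Vandermonde's identity makes the series multiplicative in `r`, and truncating
costs nothing because `X ^ n = 0`. The entries stay in `A` because `Ring.choose r k ∈ A` for
`r ∈ A`: a subring of `ℚ` contains `q` once it contains `1 / p` for every prime `p ∣ den q`, and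
`Ring.choose r k` is `p`-integral whenever `r` is, as `ℤ_[p]` is a binomial ring. Uniqueness is
forced by the explicit formula.
-/

open Finset Polynomial PowerSeries

theorem Rat.choose_eq_prod_range_div_factorial (r : ℚ) (k : ℕ) :
    Ring.choose r k = (∏ i ∈ range k, (r - i)) / k.factorial := by
  rw [Ring.choose_eq_smul, ← aeval_eq_smeval, ← descPochhammer_eval_eq_prod_range,
    aeval_def, ← eval_map, descPochhammer_map, smul_eq_mul, inv_mul_eq_div]

theorem Rat.not_dvd_den_choose_of_not_dvd_den {p : ℕ} [Fact p.Prime] {r : ℚ}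
    (hr : ¬ p ∣ r.den) (k : ℕ) : ¬ p ∣ (Ring.choose r k).den := by
  rw [← Rat.padicValuation_le_one_iff, ← Padic.norm_rat_le_one_iff_padicValuation_le_one]
  let x : ℤ_[p] := ⟨r, Padic.norm_rat_le_one hr⟩
  have hx : ((Ring.choose r k : ℚ) : ℚ_[p]) = PadicInt.Coe.ringHom (Ring.choose x k) :=
    calc ((Ring.choose r k : ℚ) : ℚ_[p])
        = Ring.choose (Rat.castHom ℚ_[p] r) k := Ring.map_choose (Rat.castHom ℚ_[p]) r k
      _ = PadicInt.Coe.ringHom (Ring.choose x k) :=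
        (Ring.map_choose (PadicInt.Coe.ringHom (p := p)) x k).symm
  exact hx ▸ (Ring.choose x k).norm_le_one

namespace Subring

variable {A : Subring ℚ}

theorem inv_den_mem {r : ℚ} (hr : r ∈ A) : (r.den : ℚ)⁻¹ ∈ A := by
  have hbez := Int.gcd_eq_gcd_ab r.num r.den
  rw [show Int.gcd r.num r.den = 1 from r.reduced] at hbez
  have : (r.den : ℚ)⁻¹ = Int.gcdA r.num r.den * r + Int.gcdB r.num r.den := by
    refine (eq_inv_of_mul_eq_one_left ?_).symm
    have hbezQ : (1 : ℚ) = r.num * Int.gcdA r.num r.den + r.den * Int.gcdB r.num r.den := by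
      exact_mod_cast hbez
    linear_combination Int.gcdA r.num r.den * Rat.mul_den_eq_num r - hbezQ
  rw [this]
  exact add_mem (mul_mem (intCast_mem A _) hr) (intCast_mem A _)

theorem inv_natCast_mem_of_dvd {b d : ℕ} (hb : (b : ℚ)⁻¹ ∈ A) (hb0 : b ≠ 0) (hdb : d ∣ b) :
    (d : ℚ)⁻¹ ∈ A := by
  obtain ⟨c, rfl⟩ := hdb
  have hc : (c : ℚ) ≠ 0 := by exact_mod_cast right_ne_zero_of_mul hb0
  have : (d : ℚ)⁻¹ = c * ((d * c : ℕ) : ℚ)⁻¹ := by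
    push_cast; field_simp
  rw [this]
  exact mul_mem (natCast_mem A c) hb

theorem inv_natCast_mem_of_forall_prime {d : ℕ}
    (h : ∀ p, p.Prime → p ∣ d → (p : ℚ)⁻¹ ∈ A) : (d : ℚ)⁻¹ ∈ A := by
  induction d using Nat.recOnMul with
  | zero => simp
  | one => simp
  | prime p hp => exact h p hp dvd_rfl
  | mul a b ha hb =>
    rw [Nat.cast_mul, mul_inv]
    exact mul_mem (ha fun p hp hpa => h p hp (hpa.mul_right b))
      (hb fun p hp hpb => h p hp (hpb.mul_left a))

theorem mem_iff_inv_den_mem {q : ℚ} : q ∈ A ↔ (q.den : ℚ)⁻¹ ∈ A := by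
  refine ⟨inv_den_mem, fun h => ?_⟩
  rw [← Rat.num_div_den q, div_eq_mul_inv]
  exact mul_mem (intCast_mem A _) h

theorem choose_mem {r : ℚ} (hr : r ∈ A) (k : ℕ) : Ring.choose r k ∈ A := by
  rw [mem_iff_inv_den_mem]
  refine inv_natCast_mem_of_forall_prime fun p hp hpd => ?_
  have : Fact p.Prime := ⟨hp⟩
  have hpr : p ∣ r.den := not_not.mp fun h => Rat.not_dvd_den_choose_of_not_dvd_den h k hpd
  exact inv_natCast_mem_of_dvd (inv_den_mem hr) r.den_ne_zero hpr

end Subring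

section TruncatedEvaluation

variable {R S : Type*} [CommRing R] [Ring S] [Algebra R S] {x : S} {n : ℕ}

theorem aeval_trunc_coe_of_pow_eq_zero (hx : x ^ n = 0) (p : R[X]) :
    aeval x (trunc n (p : R⟦X⟧)) = aeval x p := by
  obtain ⟨q, hq⟩ : (X : R[X]) ^ n ∣ p - trunc n (p : R⟦X⟧) :=
    X_pow_dvd_iff.mpr fun d hd => by simp [coeff_trunc, hd]
  have := congrArg (aeval x) hq
  rw [map_sub, map_mul, map_pow, aeval_X, hx, zero_mul, sub_eq_zero] at this
  exact this.symm

theorem aeval_trunc_mul_of_pow_eq_zero (hx : x ^ n = 0) (f g : R⟦X⟧) :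
    aeval x (trunc n (f * g)) = aeval x (trunc n f) * aeval x (trunc n g) := by
  rw [← trunc_trunc_mul_trunc, ← Polynomial.coe_mul, aeval_trunc_coe_of_pow_eq_zero hx, map_mul]

end TruncatedEvaluation

section BinomialPow

variable {R S : Type*} [CommRing R] [BinomialRing R] [Ring S] [Algebra R S]

noncomputable def binomialPow (n : ℕ) (x : S) (r : R) : S :=
  aeval x (trunc n (binomialSeries R r))

variable {n : ℕ} {x : S}

theorem binomialPow_eq_sum (r : R) :
    binomialPow n x r = ∑ k ∈ range n, Ring.choose r k • x ^ k := by
  simp [binomialPow, aeval_def, eval₂_trunc_eq_sum_range, Algebra.smul_def]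

theorem binomialPow_add (hx : x ^ n = 0) (r s : R) :
    binomialPow n x (r + s) = binomialPow n x r * binomialPow n x s := by
  rw [binomialPow, binomialSeries_add, aeval_trunc_mul_of_pow_eq_zero hx]; rfl

theorem binomialPow_natCast (hx : x ^ n = 0) (d : ℕ) : binomialPow n x (d : R) = (1 + x) ^ d := by
  rw [binomialPow, binomialSeries_nat, ← Polynomial.coe_X, ← Polynomial.coe_one,
    ← Polynomial.coe_add, ← Polynomial.coe_pow, aeval_trunc_coe_of_pow_eq_zero hx]
  simp

theorem binomialPow_zero (hx : x ^ n = 0) : binomialPow n x (0 : R) = 1 := by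
  simpa using binomialPow_natCast (R := R) hx 0

theorem binomialPow_one (hx : x ^ n = 0) : binomialPow n x (1 : R) = 1 + x := by
  simpa using binomialPow_natCast (R := R) hx 1

noncomputable def binomialPowHom (hx : x ^ n = 0) : Multiplicative R →* Sˣ where
  toFun r := ⟨binomialPow n x r.toAdd, binomialPow n x (-r.toAdd),
    by rw [← binomialPow_add hx, add_neg_cancel, binomialPow_zero hx],
    by rw [← binomialPow_add hx, neg_add_cancel, binomialPow_zero hx]⟩
  map_one' := Units.ext (binomialPow_zero hx)
  map_mul' r s := Units.ext (binomialPow_add hx r.toAdd s.toAdd)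

end BinomialPow

namespace Matrix

variable {R : Type*} [Semiring R] {n : ℕ} {X : Matrix (Fin n) (Fin n) R}

theorem pow_apply_eq_zero_of_lt_add (hX : ∀ i j, j ≤ i → X i j = 0) (k : ℕ) {i j : Fin n}
    (hij : (j : ℕ) < i + k) : (X ^ k) i j = 0 := by
  induction k generalizing j with
  | zero => exact one_apply_ne (by rintro rfl; omega)
  | succ k ih =>
    rw [pow_succ, mul_apply]
    refine sum_eq_zero fun l _ => ?_
    by_cases hl : (l : ℕ) < i + k
    · rw [ih hl, zero_mul]
    · rw [hX l j (by rw [Fin.le_def]; omega), mul_zero]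

theorem pow_eq_zero_of_strictlyUpperTriangular (hX : ∀ i j, j ≤ i → X i j = 0) : X ^ n = 0 := by
  ext i j
  exact pow_apply_eq_zero_of_lt_add hX n (by omega)

theorem sum_smul_pow_apply_of_le (hX : ∀ i j, j ≤ i → X i j = 0) (c : ℕ → R) {i j : Fin n}
    (hji : j ≤ i) :
    (∑ k ∈ range n, c k • X ^ k) i j = c 0 * (1 : Matrix (Fin n) (Fin n) R) i j := by
  rw [sum_apply, sum_eq_single_of_mem 0 (mem_range.mpr i.pos), smul_apply, pow_zero, smul_eq_mul]
  intro k _ hk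
  rw [smul_apply, pow_apply_eq_zero_of_lt_add hX k (by rw [Fin.le_def] at hji; omega), smul_zero]

end Matrix

theorem stmt_14 (n : ℕ) (A : Subring ℚ) (X : Matrix (Fin n) (Fin n) ℚ)
    (hXA : ∀ i j : Fin n, X i j ∈ A) (hXtri : ∀ i j : Fin n, j ≤ i → X i j = 0)
    (g : (Matrix (Fin n) (Fin n) ℚ)ˣ) (hg : g.val = 1 + X) :
    ∃! α : Multiplicative A →* (Matrix (Fin n) (Fin n) ℚ)ˣ,
      α (Multiplicative.ofAdd 1) = g ∧
      (∀ r : A, ∀ i j : Fin n,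
        (α (Multiplicative.ofAdd r)).val i j ∈ A ∧
        (j < i → (α (Multiplicative.ofAdd r)).val i j = 0) ∧
        (i = j → (α (Multiplicative.ofAdd r)).val i j = 1)) ∧
      (∀ r : A, (α (Multiplicative.ofAdd r)).val =
        ∑ k ∈ Finset.range n,
          ((∏ i ∈ Finset.range k, ((r : ℚ) - (i : ℚ))) / (k.factorial : ℚ)) • X ^ k) := by
  have hXn := Matrix.pow_eq_zero_of_strictlyUpperTriangular hXtri
  let α := (binomialPowHom hXn).comp (AddMonoidHom.toMultiplicative A.subtype.toAddMonoidHom)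
  have hα : ∀ r : A, (α (.ofAdd r) : Matrix (Fin n) (Fin n) ℚ) =
      ∑ k ∈ range n, Ring.choose (r : ℚ) k • X ^ k := fun r => binomialPow_eq_sum _
  have hXmem : X ∈ A.matrix := hXA
  have hformula : ∀ r : A, (α (.ofAdd r) : Matrix (Fin n) (Fin n) ℚ) = ∑ k ∈ range n,
      ((∏ i ∈ range k, ((r : ℚ) - i)) / k.factorial) • X ^ k := fun r => by
    simp only [hα, Rat.choose_eq_prod_range_div_factorial]
  refine ⟨α, ⟨Units.ext ?_, fun r i j => ⟨?_, fun hji => ?_, fun hij => ?_⟩, hformula⟩,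
    fun β hβ => MonoidHom.ext fun r => Units.ext ((hβ.2.2 r.toAdd).trans (hformula r.toAdd).symm)⟩
  · rw [hg]
    exact binomialPow_one hXn
  · rw [hα]
    have hmem : ∑ k ∈ range n, Ring.choose (r : ℚ) k • X ^ k ∈ A.matrix :=
      Subring.sum_mem _ fun k _ i j => A.mul_mem (A.choose_mem r.2 k) (pow_mem hXmem k i j)
    exact hmem i j
  · rw [hα, Matrix.sum_smul_pow_apply_of_le hXtri _ hji.le, Matrix.one_apply_ne hji.ne', mul_zero]
  · rw [hα, Matrix.sum_smul_pow_apply_of_le hXtri _ hij.ge, hij, Matrix.one_apply_eq,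
      Ring.choose_zero_right, mul_one]
end

section
/- In a torsion-free nilpotent group N, for every integer k ≥ 1 the map x ↦ x^k is injective. -/
/-!
Induction on the nilpotency class through `G ⧸ center G`. If the centre of `G` is torsion-free,
so is the centre of `G ⧸ center G`: when `z ^ m` and every `⁅z, g⁆` are central,
`⁅z, g⁆ ^ m = ⁅z ^ m, g⁆ = 1`, so every `⁅z, g⁆` is trivial. Hence torsion-freeness passes
from `G` to `G ⧸ center G`, where `k`-th roots are unique by induction; two `k`-th roots of the
same element of `G` then differ by a central `c` with `c ^ k = 1`.
-/

/-- A monoid is torsion-free if no nontrivial elements have finite order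
(the definition of `Monoid.IsTorsionFree` in the older Mathlib, since removed). -/
def Monoid.IsTorsionFree (G : Type*) [Monoid G] : Prop :=
  ∀ g : G, g ≠ 1 → ¬IsOfFinOrder g

open Subgroup
open scoped commutatorElement

section

variable {G : Type*} [Group G]

theorem Monoid.IsTorsionFree.eq_one {g : G} (htf : Monoid.IsTorsionFree G)
    (hg : IsOfFinOrder g) : g = 1 := by
  by_contra hne
  exact htf g hne hg

theorem Monoid.IsTorsionFree.eq_one_of_mem_center {c : G}
    (hZ : Monoid.IsTorsionFree (center G)) (hc : c ∈ center G) (hfin : IsOfFinOrder c) :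
    c = 1 :=
  congrArg Subtype.val (hZ.eq_one (g := ⟨c, hc⟩) (Submonoid.isOfFinOrder_coe.mp hfin) :)

theorem Monoid.IsTorsionFree.subgroup (htf : Monoid.IsTorsionFree G) (H : Subgroup G) :
    Monoid.IsTorsionFree H := fun _ hc hfin =>
  hc (Subtype.ext (htf.eq_one (Submonoid.isOfFinOrder_coe.mpr hfin)))

theorem commutatorElement_pow_left_of_mem_center {z g : G} (h : ⁅z, g⁆ ∈ center G) (n : ℕ) :
    ⁅z ^ n, g⁆ = ⁅z, g⁆ ^ n := by
  induction n with
  | zero => simp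
  | succ n ih =>
    rw [pow_succ', commutatorElement_mul_left_eq_conj_mul, ih,
      ((pow_mem h n).comm z).symm.eq, mul_inv_cancel_right, ← pow_succ]

theorem QuotientGroup.mk_mem_center_iff {N : Subgroup G} [N.Normal] {z : G} :
    (z : G ⧸ N) ∈ Subgroup.center (G ⧸ N) ↔ ∀ g : G, ⁅z, g⁆ ∈ N := by
  rw [Subgroup.mem_center_iff, QuotientGroup.mk_surjective.forall]
  refine forall_congr' fun g => ?_
  rw [← QuotientGroup.eq_one_iff, ← QuotientGroup.mk'_apply N ⁅z, g⁆, map_commutatorElement,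
    commutatorElement_eq_one_iff_mul_comm, eq_comm]
  rfl

theorem mem_center_of_mk_mem_center_of_isOfFinOrder (hZ : Monoid.IsTorsionFree (center G))
    {z : G} (hz : (z : G ⧸ center G) ∈ center (G ⧸ center G))
    (hfin : IsOfFinOrder (z : G ⧸ center G)) : z ∈ center G := by
  obtain ⟨m, hm, hzm⟩ := isOfFinOrder_iff_pow_eq_one.mp hfin
  have hzm_center : z ^ m ∈ center G := by
    rwa [← QuotientGroup.eq_one_iff, QuotientGroup.mk_pow]
  have hcomm := QuotientGroup.mk_mem_center_iff.mp hz
  rw [mem_center_iff]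
  intro g
  have hpow : ⁅z, g⁆ ^ m = 1 := by
    rw [← commutatorElement_pow_left_of_mem_center (hcomm g),
      commutatorElement_eq_one_iff_mul_comm, hzm_center.comm]
  have hzg : ⁅z, g⁆ = 1 :=
    hZ.eq_one_of_mem_center (hcomm g) (isOfFinOrder_iff_pow_eq_one.mpr ⟨m, hm, hpow⟩)
  exact (commutatorElement_eq_one_iff_mul_comm.mp hzg).symm

theorem Monoid.IsTorsionFree.center_quotient_center (hZ : Monoid.IsTorsionFree (center G)) :
    Monoid.IsTorsionFree (center (G ⧸ center G)) := by
  rintro ⟨zb, hzb⟩ hne hfin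
  obtain ⟨z, rfl⟩ := QuotientGroup.mk_surjective zb
  refine hne (Subtype.ext ((QuotientGroup.eq_one_iff z).mpr ?_))
  exact mem_center_of_mk_mem_center_of_isOfFinOrder hZ hzb (Submonoid.isOfFinOrder_coe.mpr hfin)

theorem Monoid.IsTorsionFree.of_center [Group.IsNilpotent G]
    (hZ : Monoid.IsTorsionFree (center G)) : Monoid.IsTorsionFree G := by
  refine Group.nilpotent_center_quotient_ind
    (P := fun H _ _ => Monoid.IsTorsionFree (center H) → Monoid.IsTorsionFree H) G
    (fun _ _ _ _ g hg _ => hg (Subsingleton.elim g 1)) (fun H _ _ ih hZ g hg hfin => ?_) hZ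
  have hg_center : g ∈ center H := by
    rw [← QuotientGroup.eq_one_iff]
    exact (ih hZ.center_quotient_center).eq_one
      ((QuotientGroup.mk' (center H)).isOfFinOrder hfin)
  exact hg (hZ.eq_one_of_mem_center hg_center hfin)

theorem Monoid.IsTorsionFree.isMulTorsionFree [Group.IsNilpotent G]
    (htf : Monoid.IsTorsionFree G) : IsMulTorsionFree G := by
  refine Group.nilpotent_center_quotient_ind
    (P := fun H _ _ => Monoid.IsTorsionFree H → IsMulTorsionFree H) G
    (fun _ _ _ _ => inferInstance) (fun H _ _ ih htf => ⟨fun k hk x y hxy => ?_⟩) htf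
  have : IsMulTorsionFree (H ⧸ center H) := ih (htf.subgroup _).center_quotient_center.of_center
  have hmk : (x : H ⧸ center H) = y := pow_left_injective hk <| by
    simp only [← QuotientGroup.mk_pow, hxy]
  set c := x⁻¹ * y
  have hc_center : c ∈ center H := QuotientGroup.eq.mp hmk
  have hck : c ^ k = 1 := by
    have hy : y = x * c := (mul_inv_cancel_left x y).symm
    have : x ^ k * c ^ k = x ^ k := by
      rw [← (hc_center.comm x).symm.mul_pow, ← hy]
      exact hxy.symm
    simpa using this
  have hc_fin : IsOfFinOrder c := isOfFinOrder_iff_pow_eq_one.mpr ⟨k, Nat.pos_of_ne_zero hk, hck⟩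
  exact inv_mul_eq_one.mp (htf.eq_one hc_fin)

end

theorem stmt_15 (G : Type*) [Group G] [Group.IsNilpotent G]
    (htf : Monoid.IsTorsionFree G) (k : ℕ) (hk : 1 ≤ k) :
    Function.Injective (fun x : G => x ^ k) :=
  have := htf.isMulTorsionFree
  pow_left_injective (Nat.one_le_iff_ne_zero.mp hk)
end

section
/- Let m ≥ 2 be even and let ρ : BS(1,m) → T_n(ℤ[1/m]) be an injective group homomorphism into the upper triangular matrices. Then ρ(a) is unipotent, i.e. ρ maps the generator a (and hence the normal subgroup ℤ[1/m]) into U_n(ℤ[1/m]). -/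
/-- The single defining relator `t a t⁻¹ a⁻ᵐ` of `BS(1,m)`, with `false ↦ a`, `true ↦ t`. -/
def BSrel (m : ℕ) : Set (FreeGroup Bool) :=
  {FreeGroup.of true * FreeGroup.of false * (FreeGroup.of true)⁻¹ *
    (FreeGroup.of false) ^ (-(m : ℤ))}

/-- The Baumslag–Solitar group `BS(1,m) = ⟨a, t ∣ t a t⁻¹ = aᵐ⟩`. -/
abbrev BS (m : ℕ) := PresentedGroup (BSrel m)

/-- The generator `a` of `BS(1,m)`. -/
def BSa (m : ℕ) : BS m := PresentedGroup.of false

/-- The generator `t` of `BS(1,m)`. -/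
def BSt (m : ℕ) : BS m := PresentedGroup.of true

/-!
Each diagonal entry of an upper triangular representation is a character `χ` of `BS(1,m)` into
the abelian group `ℚˣ`, so the relation `t a t⁻¹ = aᵐ` becomes `χ(a) = χ(a)ᵐ`, i.e.
`χ(a) ^ (m - 1) = 1`. For even `m` the exponent `m - 1` is odd, and the only rational number
with an odd power equal to `1` is `1` itself. Hence `χ` kills `a`, and with it the normal
closure of `a`.
-/

open Function

namespace Matrix

variable {ι α R : Type*} [Fintype ι] [LinearOrder α] [Semiring R]

theorem BlockTriangular.mul_apply_self {A B : Matrix ι ι R} {b : ι → α} (hb : Injective b)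
    (hA : A.BlockTriangular b) (hB : B.BlockTriangular b) (i : ι) :
    (A * B) i i = A i i * B i i := by
  rw [mul_apply, Finset.sum_eq_single i]
  · intro k _ hki
    rcases lt_or_gt_of_ne (hb.ne hki) with hlt | hgt
    · rw [hA hlt, zero_mul]
    · rw [hB hgt, mul_zero]
  · exact fun hi => (hi (Finset.mem_univ i)).elim

def diagEntryHom [DecidableEq ι] {M : Type*} [Monoid M] {b : ι → α} (hb : Injective b)
    (ρ : M →* Matrix ι ι R) (hρ : ∀ g, (ρ g).BlockTriangular b) (i : ι) : M →* R where
  toFun g := ρ g i i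
  map_one' := by simp
  map_mul' g h := by simp only [map_mul, (hρ g).mul_apply_self hb (hρ h)]

end Matrix

theorem eq_one_of_zpow_eq_one_of_odd {K : Type*} [Field K] [LinearOrder K] [IsStrictOrderedRing K]
    {x : K} {k : ℤ} (hk : Odd k) (hx : x ^ k = 1) : x = 1 := by
  have hpos : 0 < x := hk.zpow_pos_iff.mp (hx ▸ one_pos)
  have hk0 : k ≠ 0 := by rintro rfl; exact Int.not_odd_zero hk
  exact (zpow_left_inj₀ hpos.le zero_le_one hk0).mp (hx.trans (one_zpow k).symm)

theorem BSt_mul_BSa_mul_inv (m : ℕ) : BSt m * BSa m * (BSt m)⁻¹ = BSa m ^ (m : ℤ) := by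
  rw [← mul_inv_eq_one, ← zpow_neg]
  exact PresentedGroup.one_of_mem rfl

theorem map_BSa_zpow_sub_one {A : Type*} [CommGroup A] (m : ℕ) (φ : BS m →* A) :
    φ (BSa m) ^ ((m : ℤ) - 1) = 1 := by
  have h := congrArg φ (BSt_mul_BSa_mul_inv m)
  rw [map_mul, map_mul, map_inv, mul_inv_cancel_comm, map_zpow] at h
  rw [zpow_sub_one, ← h, mul_inv_cancel]

theorem stmt_17_general (m n : ℕ) (hme : Even m)
    (ρ : BS m →* (Matrix (Fin n) (Fin n) (Zinv m))ˣ)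
    (htri : ∀ g : BS m, ∀ i j : Fin n, j < i → (ρ g).val i j = 0) :
    (∀ i : Fin n, (ρ (BSa m)).val i i = 1) ∧
    ∀ g ∈ Subgroup.normalClosure {BSa m}, ∀ i : Fin n, (ρ g).val i i = 1 := by
  let χ : Fin n → BS m →* ℚˣ := fun i => MonoidHom.toHomUnits <|
    (Zinv m).subtype.toMonoidHom.comp <|
      Matrix.diagEntryHom injective_id ((Units.coeHom _).comp ρ) (fun g => htri g) i
  have hodd : Odd ((m : ℤ) - 1) := by
    rcases hme with ⟨r, rfl⟩
    exact ⟨r - 1, by push_cast; ring⟩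
  have hχa (i : Fin n) : χ i (BSa m) = 1 := Units.ext <| eq_one_of_zpow_eq_one_of_odd hodd <| by
    rw [← Units.val_zpow_eq_zpow_val, map_BSa_zpow_sub_one, Units.val_one]
  have hker (i : Fin n) : Subgroup.normalClosure {BSa m} ≤ (χ i).ker :=
    Subgroup.normalClosure_le_normal (Set.singleton_subset_iff.mpr (hχa i))
  have hdiag (g : BS m) (i : Fin n) (hg : χ i g = 1) : (ρ g).val i i = 1 :=
    Subtype.ext (congrArg Units.val hg)
  exact ⟨fun i => hdiag _ i (hχa i), fun g hg i => hdiag g i (hker i hg)⟩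

theorem stmt_17 (m n : ℕ) (hm : 2 ≤ m) (hme : Even m)
    (ρ : BS m →* (Matrix (Fin n) (Fin n) (Zinv m))ˣ)
    (hinj : Function.Injective ρ)
    (htri : ∀ g : BS m, ∀ i j : Fin n, j < i → (ρ g).val i j = 0) :
    (∀ i : Fin n, (ρ (BSa m)).val i i = 1) ∧
    ∀ g ∈ Subgroup.normalClosure {BSa m}, ∀ i : Fin n, (ρ g).val i i = 1 :=
  stmt_17_general m n hme ρ htri
end

section
/- Let m ≥ 2 and let ρ : BS(1,m) → T_n(ℤ[1/m]) be an injective homomorphism with ρ(ℤ[1/m]) ⊆ U_n(ℤ[1/m]) (a special representation). Then ρ^{-1}(U_n(ℤ[1/m])) is exactly the normal subgroup ℤ[1/m] of BS(1,m) = ℤ[1/m] ⋊ ℤ. -/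
namespace Matrix

variable {R : Type*} {n : ℕ}

/-- `X` is supported on the superdiagonals `j - i ≥ d`; thus `UpperFrom 1 (A - 1)` says that `A`
is upper unitriangular. -/
def UpperFrom [Zero R] (d : ℕ) (X : Matrix (Fin n) (Fin n) R) : Prop :=
  ∀ i j : Fin n, (j : ℕ) < i + d → X i j = 0

namespace UpperFrom

variable {d e : ℕ}

section Zero

variable [Zero R] {X : Matrix (Fin n) (Fin n) R}

theorem mono (hX : UpperFrom e X) (hde : d ≤ e) : UpperFrom d X :=
  fun i j hij => hX i j (by omega)

theorem zero (d : ℕ) : UpperFrom d (0 : Matrix (Fin n) (Fin n) R) := fun _ _ _ => rfl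

theorem smul {S : Type*} [SMulZeroClass S R] (c : S) (hX : UpperFrom d X) :
    UpperFrom d (c • X) :=
  fun i j h => by rw [smul_apply, hX i j h, smul_zero]

theorem eq_zero (hX : UpperFrom n X) : X = 0 :=
  ext fun i j => hX i j (by omega)

end Zero

variable [Ring R] {X Y N : Matrix (Fin n) (Fin n) R}

theorem one : UpperFrom 0 (1 : Matrix (Fin n) (Fin n) R) :=
  fun i j hij => one_apply_ne (by rintro rfl; omega)

theorem add (hX : UpperFrom d X) (hY : UpperFrom d Y) : UpperFrom d (X + Y) :=
  fun i j h => by rw [add_apply, hX i j h, hY i j h, add_zero]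

theorem sub (hX : UpperFrom d X) (hY : UpperFrom d Y) : UpperFrom d (X - Y) :=
  fun i j h => by rw [sub_apply, hX i j h, hY i j h, sub_zero]

theorem mul (hX : UpperFrom d X) (hY : UpperFrom e Y) : UpperFrom (d + e) (X * Y) := by
  intro i j hij
  refine (mul_apply ..).trans (Finset.sum_eq_zero fun k _ => ?_)
  by_cases hk : (k : ℕ) < i + d
  · rw [hX i k hk, zero_mul]
  · rw [hY k j (by omega), mul_zero]

theorem of_isUpperTriangular (hX : X.IsUpperTriangular) (hdiag : ∀ i, X i i = 1) :
    UpperFrom 1 (X - 1) := by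
  intro i j hij
  rcases (Nat.lt_succ_iff.mp hij).lt_or_eq with hlt | heq
  · rw [sub_apply, hX (show j < i from hlt), one_apply_ne (Fin.ne_of_gt hlt), sub_zero]
  · rw [Fin.ext heq, sub_apply, hdiag, one_apply_eq, sub_self]

theorem one_add_pow_sub_one_sub_nsmul (hN : UpperFrom d N) (M : ℕ) :
    UpperFrom (d + d) ((1 + N) ^ M - 1 - M • N) := by
  induction M with
  | zero => simpa using zero (d + d)
  | succ M ih =>
    have hstep : (1 + N) ^ (M + 1) - 1 - (M + 1) • N
        = ((1 + N) ^ M - 1 - M • N) * (1 + N) + M • (N * N) := by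
      rw [pow_succ, succ_nsmul]
      noncomm_ring
    rw [hstep]
    exact (ih.mul (one.add (hN.mono (Nat.zero_le d)))).add ((hN.mul hN).smul M)

/-- On the `d`-th superdiagonal, conjugation by a unitriangular `S` acts trivially on `A - 1`,
while `A ↦ A ^ M` multiplies it by `M`. -/
theorem nsmul_sub_of_mul_eq_pow_mul {S A : Matrix (Fin n) (Fin n) R} {M : ℕ}
    (hS : UpperFrom 1 (S - 1)) (hA : UpperFrom d (A - 1)) (hd : 1 ≤ d)
    (h : S * A = A ^ M * S) : UpperFrom (d + 1) (M • (A - 1) - (A - 1)) := by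
  set N := A - 1
  set U := S - 1
  set E := (1 + N) ^ M - 1 - M • N
  have hE : UpperFrom (d + d) E := one_add_pow_sub_one_sub_nsmul hA M
  have hS' : S = 1 + U := by simp [U]
  have hA' : A = 1 + N := by simp [N]
  have hpow : A ^ M = 1 + M • N + E := by simp only [E, hA']; abel
  have key : M • N - N = U * N - E - (M • N + E) * U := calc
    M • N - N = M • N - N - ((1 + M • N + E) * (1 + U) - (1 + U) * (1 + N)) := by
        rw [← hpow, ← hS', ← hA', h, sub_self, sub_zero]
    _ = U * N - E - (M • N + E) * U := by noncomm_ring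
  rw [key]
  refine (((hS.mul hA).mono ?_).sub (hE.mono ?_)).sub
    ((((hA.smul M).add (hE.mono ?_)).mul hS).mono ?_) <;> omega

theorem of_nsmul_sub [NoZeroDivisors R] {M : ℕ} (hM : (M : R) ≠ 1)
    (h : UpperFrom d (M • X - X)) : UpperFrom d X := fun i j hij => by
  have hij := h i j hij
  rw [sub_apply, smul_apply, nsmul_eq_mul, ← sub_one_mul] at hij
  exact (mul_eq_zero.mp hij).resolve_left (sub_ne_zero.mpr hM)

end UpperFrom

theorem eq_one_of_mul_eq_pow_mul [Ring R] [NoZeroDivisors R] {S A : Matrix (Fin n) (Fin n) R}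
    {M : ℕ} (hM : (M : R) ≠ 1) (hS : UpperFrom 1 (S - 1)) (hA : UpperFrom 1 (A - 1))
    (h : S * A = A ^ M * S) : A = 1 := by
  have hdepth : ∀ d, UpperFrom (d + 1) (A - 1) := by
    intro d
    induction d with
    | zero => exact hA
    | succ d ih => exact .of_nsmul_sub hM (.nsmul_sub_of_mul_eq_pow_mul hS ih (by omega) h)
  exact sub_eq_zero.mp ((hdepth n).mono (Nat.le_succ n)).eq_zero

theorem IsUpperTriangular.mul_apply_self {ι R : Type*} [LinearOrder ι] [Fintype ι]
    [NonUnitalNonAssocSemiring R] {X Y : Matrix ι ι R} (hX : X.IsUpperTriangular)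
    (hY : Y.IsUpperTriangular) (i : ι) : (X * Y) i i = X i i * Y i i := by
  refine (mul_apply ..).trans (Finset.sum_eq_single i (fun k _ hki => ?_) (by simp))
  rcases hki.lt_or_gt with hlt | hlt
  · rw [hX hlt, zero_mul]
  · rw [hY hlt, mul_zero]

end Matrix

def unitriangularPreimage {G ι R : Type*} [Group G] [LinearOrder ι] [Fintype ι]
    [DecidableEq ι] [Semiring R] (ρ : G →* (Matrix ι ι R)ˣ)
    (hρ : ∀ g, (ρ g : Matrix ι ι R).IsUpperTriangular) :
    Subgroup G where
  carrier := {g | ∀ i, (ρ g : Matrix ι ι R) i i = 1}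
  one_mem' i := by simp
  mul_mem' {g h} hg hh i := by
    rw [map_mul, Units.val_mul, (hρ g).mul_apply_self (hρ h), hg, hh, one_mul]
  inv_mem' {g} hg i := by
    simpa [hg i] using ((hρ g⁻¹).mul_apply_self (hρ g) i).symm

namespace BS

variable {m : ℕ}

theorem t_mul_a_mul_t_inv : BSt m * BSa m * (BSt m)⁻¹ = BSa m ^ m := by
  have h : PresentedGroup.mk (BSrel m) (FreeGroup.of true * FreeGroup.of false *
      (FreeGroup.of true)⁻¹ * FreeGroup.of false ^ (-(m : ℤ))) = 1 :=
    (QuotientGroup.eq_one_iff _).2 (Subgroup.subset_normalClosure rfl)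
  rw [map_mul, map_zpow, mul_eq_one_iff_eq_inv, ← zpow_neg, neg_neg, zpow_natCast] at h
  exact h

theorem t_pow_mul_a_mul_t_pow_inv (k : ℕ) :
    BSt m ^ k * BSa m * (BSt m ^ k)⁻¹ = BSa m ^ m ^ k := by
  induction k with
  | zero => simp
  | succ k ih =>
    rw [pow_succ (BSt m), pow_succ m, pow_mul, ← ih, conj_pow, ← t_mul_a_mul_t_inv]
    group

/-- `a` acts on `ℚ` as `x ↦ x + 1` and `t` as `x ↦ m x`. -/
theorem a_ne_one (hm : m ≠ 0) : BSa m ≠ 1 := by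
  have hm0 : (m : ℚ) ≠ 0 := Nat.cast_ne_zero.mpr hm
  let f : Bool → Equiv.Perm ℚ := fun b => if b then Equiv.mulRight₀ (m : ℚ) hm0
    else Equiv.addRight 1
  have hrel : ∀ r ∈ BSrel m, FreeGroup.lift f r = 1 := by
    rintro r rfl
    ext x
    simp only [zpow_neg, zpow_natCast, map_mul, FreeGroup.lift_apply_of, ↓reduceIte,
      Bool.false_eq_true, map_inv, Equiv.Perm.inv_def, map_pow, Equiv.nsmul_addRight, nsmul_eq_mul,
      mul_one, Equiv.addRight_symm, Equiv.Perm.coe_mul, Equiv.mulRight₀_apply, Equiv.coe_addRight,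
      Equiv.mulRight₀_symm_apply, Function.comp_apply, Equiv.Perm.coe_one, id_eq, f]
    field_simp
    ring
  intro h
  have := congrArg (fun g => PresentedGroup.toGroup hrel g 0) h
  simp [BSa, PresentedGroup.toGroup.of, f] at this

theorem exists_mem_normalClosure_mul_zpow (g : BS m) :
    ∃ w ∈ Subgroup.normalClosure {BSa m}, ∃ k : ℤ, g = w * BSt m ^ k := by
  set π := QuotientGroup.mk' (Subgroup.normalClosure {BSa m})
  have hrange : π.range ≤ Subgroup.zpowers (π (BSt m)) := by
    rw [MonoidHom.range_eq_map, ← PresentedGroup.closure_range_of, MonoidHom.map_closure,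
      Subgroup.closure_le]
    rintro _ ⟨_, ⟨b, rfl⟩, rfl⟩
    cases b
    · have hπa : π (BSa m) = 1 :=
        (QuotientGroup.eq_one_iff (BSa m)).2 (Subgroup.subset_normalClosure rfl)
      exact hπa ▸ one_mem _
    · exact Subgroup.mem_zpowers _
  obtain ⟨k, hk⟩ := Subgroup.mem_zpowers_iff.mp (hrange ⟨g, rfl⟩)
  rw [← map_zpow] at hk
  exact ⟨g / BSt m ^ k, QuotientGroup.eq_iff_div_mem.mp hk.symm, k, (div_mul_cancel _ _).symm⟩

theorem eq_zero_of_t_zpow_mem_unitriangularPreimage {R : Type*} [Ring R] [NoZeroDivisors R]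
    [CharZero R] {n : ℕ} (hm : 2 ≤ m) (ρ : BS m →* (Matrix (Fin n) (Fin n) R)ˣ)
    (hinj : Function.Injective ρ)
    (hρ : ∀ g, (ρ g : Matrix (Fin n) (Fin n) R).IsUpperTriangular)
    (ha : BSa m ∈ unitriangularPreimage ρ hρ) {k : ℤ}
    (ht : BSt m ^ k ∈ unitriangularPreimage ρ hρ) : k = 0 := by
  have ht' : BSt m ^ k.natAbs ∈ unitriangularPreimage ρ hρ := by
    rcases Int.natAbs_eq k with h | h <;> rw [h] at ht
    · rwa [zpow_natCast] at ht
    · rwa [zpow_neg, inv_mem_iff, zpow_natCast] at ht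
  set K := k.natAbs
  by_contra hk
  have hconj : ρ (BSt m ^ K) * ρ (BSa m) = ρ (BSa m) ^ m ^ K * ρ (BSt m ^ K) := by
    rw [← map_pow, ← map_mul, ← map_mul, ← t_pow_mul_a_mul_t_pow_inv,
      inv_mul_cancel_right]
  have hρa : ρ (BSa m) = 1 := Units.ext <| Matrix.eq_one_of_mul_eq_pow_mul
    (Nat.cast_ne_one.mpr (Nat.one_lt_pow (Int.natAbs_ne_zero.mpr hk) (by omega : 1 < m)).ne')
    (.of_isUpperTriangular (hρ _) ht') (.of_isUpperTriangular (hρ _) ha)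
    (by simpa using congrArg Units.val hconj)
  exact a_ne_one (by omega) (hinj (hρa.trans (map_one ρ).symm))

end BS

theorem stmt_18 (m n : ℕ) (hm : 2 ≤ m)
    (ρ : BS m →* (Matrix (Fin n) (Fin n) (Zinv m))ˣ)
    (hinj : Function.Injective ρ)
    (htri : ∀ g : BS m, ∀ i j : Fin n, j < i → (ρ g).val i j = 0)
    (hspec : ∀ g ∈ Subgroup.normalClosure {BSa m}, ∀ i : Fin n, (ρ g).val i i = 1) :
    ∀ g : BS m, g ∈ Subgroup.normalClosure {BSa m} ↔ ∀ i : Fin n, (ρ g).val i i = 1 := by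
  have hρ : ∀ g, (ρ g : Matrix (Fin n) (Fin n) (Zinv m)).IsUpperTriangular :=
    fun g i j => htri g i j
  have hN : Subgroup.normalClosure {BSa m} ≤ unitriangularPreimage ρ hρ := hspec
  suffices Subgroup.normalClosure {BSa m} = unitriangularPreimage ρ hρ from
    fun g => SetLike.ext_iff.mp this g
  refine le_antisymm hN fun g hg => ?_
  obtain ⟨w, hw, k, rfl⟩ := BS.exists_mem_normalClosure_mul_zpow g
  have ht : BSt m ^ k ∈ unitriangularPreimage ρ hρ := by
    simpa only [inv_mul_cancel_left] using mul_mem (inv_mem (hN hw)) hg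
  have hk : k = 0 := BS.eq_zero_of_t_zpow_mem_unitriangularPreimage hm ρ hinj hρ
    (hN (Subgroup.subset_normalClosure rfl)) ht
  rwa [hk, zpow_zero, mul_one]
end

section
/- Let G = BS(1,m) = ⟨a, t | t a t^{-1} = a^m⟩ with m odd. Then G is the union of its three subgroups B_1 = ⟨a², t⟩, B_2 = ⟨a², at⟩, and B_3 = ⟨a, t²⟩. -/
/-! Write every element as `t⁻ᵏ aʳ tˡ` with `k, ℓ ≥ 0`; conjugating by `t` turns this into
`t⁻⁽ᵏ⁺¹⁾ a^(rm) t^(ℓ+1)`, which flips the parities of `k` and `ℓ` but, `m` being odd, not that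
of `r`. If `r` is even the word lies in `⟨a², t⟩`. Otherwise we may take `k` even, and then the
word lies in `⟨a, t²⟩` when `ℓ` is even and in `⟨a², at⟩` when `ℓ` is odd, because
`(at)² = a^(m+1) t²` with `m + 1` even puts `t²` in `⟨a², at⟩`. -/

namespace Subgroup

variable {G : Type*} [Group G] {H : Subgroup G} {x : G}

lemma pow_mem_of_sq_mem (hx : x ^ 2 ∈ H) {n : ℕ} (hn : Even n) : x ^ n ∈ H := by
  obtain ⟨s, rfl⟩ := hn
  rw [← two_mul, pow_mul]
  exact H.pow_mem hx s

lemma zpow_mem_of_sq_mem (hx : x ^ 2 ∈ H) {n : ℤ} (hn : Even n) : x ^ n ∈ H := by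
  obtain ⟨s, rfl⟩ := hn
  rw [← two_mul, zpow_mul]
  exact H.zpow_mem (mod_cast hx) s

end Subgroup

namespace BS

variable {m : ℕ}

lemma BSt_mul_BSa_mul_BSt_inv : BSt m * BSa m * (BSt m)⁻¹ = BSa m ^ (m : ℤ) := by
  have h := PresentedGroup.one_of_mem (rels := BSrel m) rfl
  simp only [map_mul, map_inv, map_zpow] at h
  exact mul_inv_eq_one.mp (by rwa [zpow_neg] at h)

lemma BSt_mul_BSa_zpow_mul_BSt_inv (r : ℤ) :
    BSt m * BSa m ^ r * (BSt m)⁻¹ = BSa m ^ (r * m) := by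
  rw [← conj_zpow, BSt_mul_BSa_mul_BSt_inv, ← zpow_mul, mul_comm]

variable (m) in
def word (k : ℕ) (r : ℤ) (ℓ : ℕ) : BS m := (BSt m ^ k)⁻¹ * BSa m ^ r * BSt m ^ ℓ

lemma word_eq_word_succ (k : ℕ) (r : ℤ) (ℓ : ℕ) :
    word m k r ℓ = word m (k + 1) (r * m) (ℓ + 1) := by
  rw [word, word, ← BSt_mul_BSa_zpow_mul_BSt_inv]
  group

lemma word_eq_word_add (k : ℕ) (r : ℤ) (ℓ n : ℕ) :
    word m k r ℓ = word m (k + n) (r * m ^ n) (ℓ + n) := by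
  induction n generalizing r with
  | zero => simp
  | succ n ih => rw [ih, word_eq_word_succ (k + n), mul_assoc, ← pow_succ]; rfl

lemma word_mul_word (k : ℕ) (r : ℤ) (n : ℕ) (r' : ℤ) (ℓ : ℕ) :
    word m k r n * word m n r' ℓ = word m k (r + r') ℓ := by
  simp only [word]
  group

lemma word_inv (k : ℕ) (r : ℤ) (ℓ : ℕ) : (word m k r ℓ)⁻¹ = word m ℓ (-r) k := by
  simp only [word]
  group

lemma exists_word_eq (g : BS m) : ∃ k r ℓ, word m k r ℓ = g := by
  let words : Subgroup (BS m) :=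
    { carrier := {g | ∃ k r ℓ, word m k r ℓ = g}
      one_mem' := ⟨0, 0, 0, by simp [word]⟩
      mul_mem' := by
        rintro _ _ ⟨k, r, ℓ, rfl⟩ ⟨k', r', ℓ', rfl⟩
        -- shift both words until the inner powers of `t` cancel
        refine ⟨k + k', r * m ^ k' + r' * m ^ ℓ, ℓ' + ℓ, ?_⟩
        rw [word_eq_word_add k r ℓ k', word_eq_word_add k' r' ℓ' ℓ, add_comm ℓ k',
          word_mul_word]
      inv_mem' := by
        rintro _ ⟨k, r, ℓ, rfl⟩
        exact ⟨ℓ, -r, k, (word_inv k r ℓ).symm⟩ }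
  refine PresentedGroup.generated_by _ words ?_ g
  rintro (_ | _)
  · exact ⟨0, 1, 0, by simp [word, BSa]⟩
  · exact ⟨0, 0, 1, by simp [word, BSt]⟩

lemma word_mem {H : Subgroup (BS m)} {k : ℕ} {r : ℤ} {ℓ : ℕ} (hk : BSt m ^ k ∈ H)
    (hr : BSa m ^ r ∈ H) (hℓ : BSt m ^ ℓ ∈ H) : word m k r ℓ ∈ H :=
  H.mul_mem (H.mul_mem (H.inv_mem hk) hr) hℓ

variable (m) in
def B₁ : Subgroup (BS m) := Subgroup.closure {BSa m ^ 2, BSt m}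

variable (m) in
def B₂ : Subgroup (BS m) := Subgroup.closure {BSa m ^ 2, BSa m * BSt m}

variable (m) in
def B₃ : Subgroup (BS m) := Subgroup.closure {BSa m, BSt m ^ 2}

lemma word_mem_B₁ (k : ℕ) {r : ℤ} (ℓ : ℕ) (hr : Even r) : word m k r ℓ ∈ B₁ m := by
  have ha : BSa m ^ 2 ∈ B₁ m := Subgroup.subset_closure (by simp)
  have ht : BSt m ∈ B₁ m := Subgroup.subset_closure (by simp)
  exact word_mem (pow_mem ht k) (Subgroup.zpow_mem_of_sq_mem ha hr) (pow_mem ht ℓ)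

lemma word_mem_B₃ {k : ℕ} (r : ℤ) {ℓ : ℕ} (hk : Even k) (hℓ : Even ℓ) : word m k r ℓ ∈ B₃ m := by
  have ha : BSa m ∈ B₃ m := Subgroup.subset_closure (by simp)
  have ht : BSt m ^ 2 ∈ B₃ m := Subgroup.subset_closure (by simp)
  exact word_mem (Subgroup.pow_mem_of_sq_mem ht hk) (zpow_mem ha r)
    (Subgroup.pow_mem_of_sq_mem ht hℓ)

lemma BSt_sq_mem_B₂ (hm : Odd m) : BSt m ^ 2 ∈ B₂ m := by
  have ha : BSa m ^ 2 ∈ B₂ m := Subgroup.subset_closure (by simp)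
  have hat : BSa m * BSt m ∈ B₂ m := Subgroup.subset_closure (by simp)
  have hsq : (BSa m * BSt m) ^ 2 = BSa m ^ (1 + (m : ℤ)) * BSt m ^ 2 := by
    rw [sq, sq, zpow_add, zpow_one, ← BSt_mul_BSa_mul_BSt_inv]
    group
  have hm' : Even (-(1 + (m : ℤ))) := by simpa [parity_simps] using hm
  rw [show BSt m ^ 2 = BSa m ^ (-(1 + (m : ℤ))) * (BSa m * BSt m) ^ 2 by rw [hsq]; group]
  exact mul_mem (Subgroup.zpow_mem_of_sq_mem ha hm') (pow_mem hat 2)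

lemma word_mem_B₂ (hm : Odd m) {k : ℕ} {r : ℤ} {ℓ : ℕ} (hk : Even k) (hr : Odd r)
    (hℓ : Odd ℓ) : word m k r ℓ ∈ B₂ m := by
  have ha : BSa m ^ 2 ∈ B₂ m := Subgroup.subset_closure (by simp)
  have hat : BSa m * BSt m ∈ B₂ m := Subgroup.subset_closure (by simp)
  have ht := BSt_sq_mem_B₂ hm
  obtain ⟨b, rfl⟩ := hℓ
  have hword : word m k r (2 * b + 1) =
      (BSt m ^ k)⁻¹ * BSa m ^ (r - 1) * (BSa m * BSt m) * BSt m ^ (2 * b) := by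
    simp only [word]
    group
  rw [hword]
  refine mul_mem (mul_mem (mul_mem (inv_mem ?_) ?_) hat) ?_
  · exact Subgroup.pow_mem_of_sq_mem ht hk
  · exact Subgroup.zpow_mem_of_sq_mem ha (hr.sub_odd odd_one)
  · exact Subgroup.pow_mem_of_sq_mem ht (even_two_mul b)

lemma word_mem_B₂_or_B₃ (hm : Odd m) {k : ℕ} {r : ℤ} (ℓ : ℕ) (hk : Even k) (hr : Odd r) :
    word m k r ℓ ∈ B₂ m ∨ word m k r ℓ ∈ B₃ m := by
  rcases Nat.even_or_odd ℓ with hℓ | hℓ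
  · exact Or.inr (word_mem_B₃ r hk hℓ)
  · exact Or.inl (word_mem_B₂ hm hk hr hℓ)

end BS

theorem stmt_19_general (m : ℕ) (hmo : Odd m) (g : BS m) :
    g ∈ Subgroup.closure {(BSa m) ^ 2, BSt m} ∨
    g ∈ Subgroup.closure {(BSa m) ^ 2, BSa m * BSt m} ∨
    g ∈ Subgroup.closure {BSa m, (BSt m) ^ 2} := by
  obtain ⟨k, r, ℓ, rfl⟩ := BS.exists_word_eq g
  rcases Int.even_or_odd r with hr | hr
  · exact Or.inl (BS.word_mem_B₁ k ℓ hr)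
  rcases Nat.even_or_odd k with hk | hk
  · exact Or.inr (BS.word_mem_B₂_or_B₃ hmo ℓ hk hr)
  · rw [BS.word_eq_word_succ]
    exact Or.inr (BS.word_mem_B₂_or_B₃ hmo (ℓ + 1) hk.add_one (hr.mul hmo.natCast))

theorem stmt_19 (m : ℕ) (hm : 2 ≤ m) (hmo : Odd m) (g : BS m) :
    g ∈ Subgroup.closure {(BSa m) ^ 2, BSt m} ∨
    g ∈ Subgroup.closure {(BSa m) ^ 2, BSa m * BSt m} ∨
    g ∈ Subgroup.closure {BSa m, (BSt m) ^ 2} :=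
  stmt_19_general m hmo g
end
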